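/- The function μ ↦ T(μ)·artanh(2T(μ)/μ) is real-analytic on the open interval (0,∞); in particular it is analytic at μ = 2, where T(2) = 0. -/

import Mathlib

open Complex

/-- The principal square root `T(μ) = √(μ²/4 − 1)` (as a complex number). -/
noncomputable def T (μ : ℝ) : ℂ := ((μ : ℂ)^2/4 - 1) ^ ((1 : ℂ)/2)

/-- `artanh(w) = (1/2)·log((1+w)/(1−w))` with the principal logarithm. -/
noncomputable def artanh (w : ℂ) : ℂ := (1/2) * Complex.log ((1 + w)/(1 - w))

/-!
Put `w = 2T/μ`, so that `w² = 1 - 4/μ²`. For `0 < μ < 2` we have `T = i·√(1 - μ²/4)` with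
an analytic square root of a positive quantity, and `w` is purely imaginary, so `(1 + w)/(1 - w)`
lies on the unit circle away from `-1`, off the branch cut of `log`: the expression is a
composition of analytic maps. For `μ > √2` we have `‖w‖ < 1`, and the odd Taylor series
`artanh w = w · H(w²)`, `H z = ∑ zᵏ/(2k+1)`, gives
`T·artanh w = (μ² - 4)/(2μ) · H(1 - 4/μ²)`, in which the square root has cancelled.
The two ranges overlap and cover `(0, ∞)`.
-/

open Filter Topology Set

/-- `artanh (√z) / √z` on the unit disc, as a power series in `z`. -/
noncomputable def artanhSeries (z : ℂ) : ℂ := ∑' k : ℕ, z ^ k / (2 * k + 1)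

lemma norm_pow_div_two_mul_add_one_le (z : ℂ) (k : ℕ) :
    ‖z ^ k / (2 * k + 1)‖ ≤ ‖z‖ ^ k := by
  rw [norm_div, norm_pow]
  refine div_le_self (by positivity) ?_
  rw [show (2 * (k : ℂ) + 1) = ((2 * k + 1 : ℕ) : ℂ) by push_cast; ring, norm_natCast]
  norm_cast
  omega

lemma hasSum_artanhSeries {z : ℂ} (hz : ‖z‖ < 1) :
    HasSum (fun k : ℕ => z ^ k / (2 * k + 1)) (artanhSeries z) :=
  (Summable.of_norm_bounded (summable_geometric_of_lt_one (norm_nonneg z) hz)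
    (norm_pow_div_two_mul_add_one_le z)).hasSum

lemma analyticAt_artanhSeries {z : ℂ} (hz : ‖z‖ < 1) : AnalyticAt ℂ artanhSeries z := by
  obtain ⟨r, hzr, hr1⟩ := exists_between hz
  have hdiff : DifferentiableOn ℂ artanhSeries (Metric.ball 0 r) :=
    differentiableOn_tsum_of_summable_norm
      (summable_geometric_of_lt_one ((norm_nonneg z).trans hzr.le) hr1)
      (fun k => ((differentiable_pow k).div_const _).differentiableOn) Metric.isOpen_ball
      fun k w hw => (norm_pow_div_two_mul_add_one_le w k).trans
        (pow_le_pow_left₀ (norm_nonneg w) (mem_ball_zero_iff.1 hw).le k)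
  exact hdiff.analyticAt (Metric.isOpen_ball.mem_nhds (mem_ball_zero_iff.2 hzr))

lemma Complex.log_div_of_re_pos {x y : ℂ} (hx : 0 < x.re) (hy : 0 < y.re) :
    log (x / y) = log x - log y := by
  have hx' := abs_lt.1 (abs_arg_lt_pi_div_two_iff.2 (Or.inl hx))
  have hy' := abs_lt.1 (abs_arg_lt_pi_div_two_iff.2 (Or.inl hy))
  calc log (x / y) = log (exp (log x - log y)) := by
        rw [exp_sub, exp_log (ne_of_apply_ne re (by simpa using hx.ne')),
          exp_log (ne_of_apply_ne re (by simpa using hy.ne'))]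
    _ = log x - log y := by
        apply log_exp <;> simp only [sub_im, log_im] <;> linarith [Real.pi_pos]

lemma log_one_add_sub_log_one_sub {w : ℂ} (hw : ‖w‖ < 1) :
    log (1 + w) - log (1 - w) = 2 * w * artanhSeries (w ^ 2) := by
  have hw2 : ‖w ^ 2‖ < 1 := by rw [norm_pow]; exact pow_lt_one₀ (norm_nonneg w) hw two_ne_zero
  set f : ℕ → ℂ := fun n => (-1) ^ (n + 1) * w ^ n / n + w ^ n / n
  have hsum : HasSum f (log (1 + w) + -log (1 - w)) :=
    (hasSum_taylorSeries_log hw).add (hasSum_taylorSeries_neg_log hw)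
  have heven : HasSum (fun k => f (2 * k)) 0 := by
    convert hasSum_zero with k
    simp only [f, pow_succ, pow_mul]
    ring
  have hodd : HasSum (fun k => f (2 * k + 1)) (2 * w * artanhSeries (w ^ 2)) := by
    refine ((hasSum_artanhSeries hw2).mul_left (2 * w)).congr_fun fun k => ?_
    simp only [f, pow_succ, pow_mul]
    push_cast
    ring
  rw [sub_eq_add_neg, ← zero_add (2 * w * _)]
  exact hsum.unique (heven.even_add_odd hodd)

lemma artanh_eq_mul_artanhSeries_sq {w : ℂ} (hw : ‖w‖ < 1) :
    artanh w = w * artanhSeries (w ^ 2) := by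
  have hre := abs_le.1 (abs_re_le_norm w)
  rw [artanh, log_div_of_re_pos (by simp only [add_re, one_re]; linarith)
    (by simp only [sub_re, one_re]; linarith),
    log_one_add_sub_log_one_sub hw]
  ring

lemma AnalyticAt.comp_ofReal_of_eventuallyEq {F : ℂ → ℂ} {f : ℝ → ℂ} {x : ℝ}
    (hF : AnalyticAt ℂ F x) (hf : ∀ᶠ t : ℝ in 𝓝 x, F t = f t) : AnalyticAt ℝ f x :=
  (hF.restrictScalars.comp (ofRealCLM.analyticAt x)).congr hf

lemma analyticAt_artanh {w : ℂ} (hw : (1 + w) / (1 - w) ∈ slitPlane) :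
    AnalyticAt ℂ artanh w := by
  have hden : 1 - w ≠ 0 := fun h => slitPlane_ne_zero hw (by rw [h, div_zero])
  unfold artanh
  fun_prop (disch := assumption)

lemma one_add_mul_I_div_one_sub_mem_slitPlane (t : ℝ) :
    (1 + t * I) / (1 - t * I) ∈ slitPlane := by
  rcases eq_or_ne t 0 with rfl | ht
  · simp
  refine mem_slitPlane_iff.2 (Or.inr ?_)
  have hden : 0 < 1 + t * t := add_pos_of_pos_of_nonneg one_pos (mul_self_nonneg t)
  simp [div_im, normSq_apply, neg_div, ht, hden.ne']

lemma T_sq (μ : ℝ) : T μ ^ 2 = (μ : ℂ) ^ 2 / 4 - 1 := by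
  have : (1 / 2 : ℂ) = ((2 : ℕ) : ℂ)⁻¹ := by norm_num
  rw [T, this, cpow_nat_inv_pow _ two_ne_zero]

lemma T_two : T 2 = 0 := by
  norm_num [T]

lemma T_eq_I_mul_cpow {μ : ℝ} (hμ : μ ^ 2 ≤ 4) :
    T μ = I * (1 - (μ : ℂ) ^ 2 / 4) ^ (1 / 2 : ℂ) := by
  have hneg : μ ^ 2 / 4 - 1 ≤ 0 := by linarith
  have hcpow := ofReal_cpow_of_nonpos hneg (1 / 2)
  push_cast at hcpow
  rw [T, hcpow, show (Real.pi : ℂ) * I * (1 / 2) = Real.pi / 2 * I by ring,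
    exp_pi_div_two_mul_I, mul_comm]
  ring_nf

lemma analyticAt_T_mul_artanh_of_lt_two {μ₀ : ℝ} (h0 : 0 < μ₀) (h2 : μ₀ < 2) :
    AnalyticAt ℝ (fun μ : ℝ => T μ * artanh (2 * T μ / μ)) μ₀ := by
  set s : ℂ → ℂ := fun z => (1 - z ^ 2 / 4) ^ (1 / 2 : ℂ)
  have hq : 0 < 1 - μ₀ ^ 2 / 4 := by nlinarith
  have hcast : 1 - (μ₀ : ℂ) ^ 2 / 4 = ((1 - μ₀ ^ 2 / 4 : ℝ) : ℂ) := by push_cast; ring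
  have hs : s μ₀ = (√(1 - μ₀ ^ 2 / 4) : ℂ) := by
    simp only [s]
    rw [hcast, Real.sqrt_eq_rpow, ofReal_cpow hq.le]
    norm_num
  have hw : 2 * (I * s μ₀) / μ₀ = ((2 * √(1 - μ₀ ^ 2 / 4) / μ₀ : ℝ) : ℂ) * I := by
    rw [hs]; push_cast; ring
  have hsa : AnalyticAt ℂ s μ₀ := by
    have : 1 - (μ₀ : ℂ) ^ 2 / 4 ∈ slitPlane := by rw [hcast]; exact ofReal_mem_slitPlane.2 hq
    fun_prop (disch := assumption)
  have hμ₀ : (μ₀ : ℂ) ≠ 0 := ofReal_ne_zero.2 h0.ne'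
  have hartanh : AnalyticAt ℂ (fun z => artanh (2 * (I * s z) / z)) μ₀ :=
    (analyticAt_artanh (hw ▸ one_add_mul_I_div_one_sub_mem_slitPlane _)).comp
      (by fun_prop (disch := assumption))
  have hF : AnalyticAt ℂ (fun z => I * s z * artanh (2 * (I * s z) / z)) μ₀ :=
    (analyticAt_const.mul hsa).mul hartanh
  refine hF.comp_ofReal_of_eventuallyEq ?_
  filter_upwards [Ioo_mem_nhds h0 h2] with μ hμ
  rw [T_eq_I_mul_cpow (by nlinarith [hμ.1, hμ.2])]

lemma norm_one_sub_four_div_sq_lt_one {μ : ℝ} (h : √2 < μ) :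
    ‖1 - 4 / (μ : ℂ) ^ 2‖ < 1 := by
  have hμ : 2 < μ ^ 2 := (Real.sqrt_lt' ((Real.sqrt_nonneg 2).trans_lt h)).1 h
  rw [show 1 - 4 / (μ : ℂ) ^ 2 = ((1 - 4 / μ ^ 2 : ℝ) : ℂ) by push_cast; ring, norm_real,
    Real.norm_eq_abs, abs_lt]
  constructor
  · have : 4 / μ ^ 2 < 2 := by rw [div_lt_iff₀ (by positivity)]; linarith
    linarith
  · have : 0 < 4 / μ ^ 2 := by positivity
    linarith

lemma T_mul_artanh_eq_mul_artanhSeries {μ : ℝ} (h : √2 < μ) :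
    T μ * artanh (2 * T μ / μ) =
      ((μ : ℂ) ^ 2 - 4) / (2 * μ) * artanhSeries (1 - 4 / (μ : ℂ) ^ 2) := by
  have hμ : (μ : ℂ) ≠ 0 := ofReal_ne_zero.2 ((Real.sqrt_nonneg 2).trans_lt h).ne'
  have hw2 : (2 * T μ / μ) ^ 2 = 1 - 4 / (μ : ℂ) ^ 2 := by
    rw [div_pow, mul_pow, T_sq]; field_simp; ring
  have hw : ‖2 * T μ / μ‖ < 1 := by
    have := norm_one_sub_four_div_sq_lt_one h
    rw [← hw2, norm_pow] at this
    exact (pow_lt_one_iff_of_nonneg (norm_nonneg _) two_ne_zero).1 this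
  rw [artanh_eq_mul_artanhSeries_sq hw, hw2, ← mul_assoc,
    show T μ * (2 * T μ / μ) = 2 * T μ ^ 2 / μ by ring, T_sq]
  field_simp
  ring

lemma analyticAt_T_mul_artanh_of_sqrt_two_lt {μ₀ : ℝ} (h : √2 < μ₀) :
    AnalyticAt ℝ (fun μ : ℝ => T μ * artanh (2 * T μ / μ)) μ₀ := by
  have hμ₀ : (μ₀ : ℂ) ≠ 0 := ofReal_ne_zero.2 ((Real.sqrt_nonneg 2).trans_lt h).ne'
  have hseries : AnalyticAt ℂ (fun z : ℂ => artanhSeries (1 - 4 / z ^ 2)) μ₀ :=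
    (analyticAt_artanhSeries (norm_one_sub_four_div_sq_lt_one h)).comp
      (f := fun z : ℂ => 1 - 4 / z ^ 2) (by fun_prop (disch := exact pow_ne_zero 2 hμ₀))
  have hfactor : AnalyticAt ℂ (fun z : ℂ => (z ^ 2 - 4) / (2 * z)) μ₀ := by
    fun_prop (disch := exact mul_ne_zero two_ne_zero hμ₀)
  refine (hfactor.mul hseries).comp_ofReal_of_eventuallyEq ?_
  filter_upwards [Ioi_mem_nhds h] with μ hμ
  exact (T_mul_artanh_eq_mul_artanhSeries hμ).symm

/-- The map `μ ↦ T(μ)·artanh(2T(μ)/μ)` is real-analytic on `(0,∞)`;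
in particular it is analytic at `μ = 2`, where `T(2) = 0`. -/
theorem T_artanh_analyticOnNhd :
    AnalyticOnNhd ℝ (fun μ : ℝ => T μ * artanh (2 * T μ / (μ : ℂ))) (Set.Ioi (0 : ℝ))
      ∧ T 2 = 0 := by
  refine ⟨fun μ hμ => ?_, T_two⟩
  rcases lt_or_ge μ 2 with h | h
  · exact analyticAt_T_mul_artanh_of_lt_two hμ h
  · exact analyticAt_T_mul_artanh_of_sqrt_two_lt ((Real.sqrt_lt' hμ).2 (by nlinarith))
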